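/- If strings T_A and T_B have edit distance at most k, and T_A is partitioned into b consecutive blocks, then for all but at most k of these blocks, the block (as a string) occurs as a substring of T_B starting at a position that differs from its starting position in T_A by at most k. -/

import Mathlib

/-- Costs of the edit operations (formerly `Levenshtein.Cost` in Mathlib). -/
structure Levenshtein.Cost (α β δ : Type*) where
  delete : α → δ
  insert : β → δ
  substitute : α → β → δ

/-- Unit costs, as the former `Levenshtein.defaultCost` of Mathlib. -/
def Levenshtein.defaultCost {α : Type*} [DecidableEq α] : Levenshtein.Cost α α ℕ where
  delete _ := 1
  insert _ := 1
  substitute a b := if a = b then 0 else 1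

/-- Weighted edit distance, by the recursion satisfied by the former Mathlib `levenshtein`. -/
def levenshtein {α β δ : Type*} [AddZeroClass δ] [Min δ] (C : Levenshtein.Cost α β δ) :
    List α → List β → δ
  | [], ys => (ys.map C.insert).sum
  | x :: xs, [] => C.delete x + levenshtein C xs []
  | x :: xs, y :: ys =>
      min (C.delete x + levenshtein C xs (y :: ys))
        (min (C.insert y + levenshtein C (x :: xs) ys)
          (C.substitute x y + levenshtein C xs ys))

/-!
Fix an optimal alignment of `T_A` with `T_B` and cut it along the block boundaries of `T_A`:
each block receives its own share of the at most `k` edits, so at most `k` blocks receive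
any edit at all. An untouched block is copied verbatim into `T_B`, at a position that differs
from its position in `T_A` by at most the number of edits spent on the earlier blocks.
-/

inductive EditScript {α : Type*} : ℕ → List α → List α → Prop
  | nil : EditScript 0 [] []
  | copy (a : α) {d xs ys} : EditScript d xs ys → EditScript d (a :: xs) (a :: ys)
  | subst (a b : α) {d xs ys} : EditScript d xs ys → EditScript (d + 1) (a :: xs) (b :: ys)
  | delete (a : α) {d xs ys} : EditScript d xs ys → EditScript (d + 1) (a :: xs) ys
  | insert (b : α) {d xs ys} : EditScript d xs ys → EditScript (d + 1) xs (b :: ys)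

namespace EditScript

variable {α : Type*}

theorem symm {d : ℕ} {xs ys : List α} (h : EditScript d xs ys) : EditScript d ys xs := by
  induction h with
  | nil => exact nil
  | copy a _ ih => exact ih.copy a
  | subst a b _ ih => exact ih.subst b a
  | delete a _ ih => exact ih.insert a
  | insert b _ ih => exact ih.delete b

theorem length_le {d : ℕ} {xs ys : List α} (h : EditScript d xs ys) :
    ys.length ≤ xs.length + d := by
  induction h <;> grind

theorem eq_of_zero {xs ys : List α} (h : EditScript 0 xs ys) : xs = ys := by
  generalize hd : 0 = d at h
  induction h with
  | nil => rfl
  | copy a _ ih => rw [ih hd]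
  | _ => omega

theorem split_append {d : ℕ} {xs₁ xs₂ ys : List α} (h : EditScript d (xs₁ ++ xs₂) ys) :
    ∃ c₁ c₂ ys₁ ys₂, c₁ + c₂ = d ∧ ys = ys₁ ++ ys₂ ∧
      EditScript c₁ xs₁ ys₁ ∧ EditScript c₂ xs₂ ys₂ := by
  generalize hxs : xs₁ ++ xs₂ = xs at h
  induction h generalizing xs₁ with
  | nil =>
    obtain ⟨rfl, rfl⟩ := List.append_eq_nil_iff.mp hxs
    exact ⟨0, 0, [], [], rfl, rfl, nil, nil⟩
  | @copy a d xs ys h ih =>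
    rcases xs₁ with _ | ⟨x, xs₁⟩
    · exact ⟨0, d, [], _, by simp, rfl, nil, by simpa [← hxs] using h.copy a⟩
    · simp only [List.cons_append, List.cons.injEq] at hxs
      obtain ⟨rfl, hxs⟩ := hxs
      obtain ⟨c₁, c₂, ys₁, ys₂, hc, rfl, h₁, h₂⟩ := ih hxs
      exact ⟨c₁, c₂, x :: ys₁, ys₂, hc, rfl, h₁.copy x, h₂⟩
  | @subst a b d xs ys h ih =>
    rcases xs₁ with _ | ⟨x, xs₁⟩
    · exact ⟨0, d + 1, [], _, by simp, rfl, nil, by simpa [← hxs] using h.subst a b⟩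
    · simp only [List.cons_append, List.cons.injEq] at hxs
      obtain ⟨rfl, hxs⟩ := hxs
      obtain ⟨c₁, c₂, ys₁, ys₂, rfl, rfl, h₁, h₂⟩ := ih hxs
      exact ⟨c₁ + 1, c₂, b :: ys₁, ys₂, by omega, rfl, h₁.subst x b, h₂⟩
  | @delete a d xs ys h ih =>
    rcases xs₁ with _ | ⟨x, xs₁⟩
    · exact ⟨0, d + 1, [], _, by simp, rfl, nil, by simpa [← hxs] using h.delete a⟩
    · simp only [List.cons_append, List.cons.injEq] at hxs
      obtain ⟨rfl, hxs⟩ := hxs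
      obtain ⟨c₁, c₂, ys₁, ys₂, rfl, rfl, h₁, h₂⟩ := ih hxs
      exact ⟨c₁ + 1, c₂, ys₁, ys₂, by omega, rfl, h₁.delete x, h₂⟩
  | @insert b d xs ys h ih =>
    obtain ⟨c₁, c₂, ys₁, ys₂, rfl, rfl, h₁, h₂⟩ := ih hxs
    exact ⟨c₁ + 1, c₂, b :: ys₁, ys₂, by omega, rfl, h₁.insert b, h₂⟩

end EditScript

theorem exists_le_min {β : Type*} [LinearOrder β] {P : β → Prop} {x y : β}
    (hx : ∃ d ≤ x, P d) (hy : ∃ d ≤ y, P d) : ∃ d ≤ min x y, P d := by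
  rcases le_total x y with h | h
  · simpa [min_eq_left h] using hx
  · simpa [min_eq_right h] using hy

theorem exists_editScript_le_levenshtein {α : Type*} [DecidableEq α] (xs ys : List α) :
    ∃ d ≤ levenshtein Levenshtein.defaultCost xs ys, EditScript d xs ys := by
  induction xs generalizing ys with
  | nil =>
    induction ys with
    | nil => exact ⟨0, Nat.zero_le _, .nil⟩
    | cons b ys ih =>
      obtain ⟨d, hd, h⟩ := ih
      refine ⟨d + 1, ?_, h.insert b⟩
      rw [levenshtein] at hd ⊢
      simpa [Levenshtein.defaultCost, add_comm] using hd
  | cons a xs ihx =>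
    induction ys with
    | nil =>
      obtain ⟨d, hd, h⟩ := ihx []
      refine ⟨d + 1, ?_, h.delete a⟩
      rw [levenshtein]
      change d + 1 ≤ 1 + _
      omega
    | cons b ys ihy =>
      obtain ⟨d₁, hd₁, h₁⟩ := ihx (b :: ys)
      obtain ⟨d₂, hd₂, h₂⟩ := ihy
      obtain ⟨d₃, hd₃, h₃⟩ := ihx ys
      rw [levenshtein]
      refine exists_le_min ⟨d₁ + 1, ?_, h₁.delete a⟩ (exists_le_min ⟨d₂ + 1, ?_, h₂.insert b⟩ ?_)
      · change d₁ + 1 ≤ 1 + _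
        omega
      · change d₂ + 1 ≤ 1 + _
        omega
      · by_cases hab : a = b
        · subst hab
          refine ⟨d₃, ?_, h₃.copy a⟩
          rw [show Levenshtein.defaultCost.substitute a a = 0 from if_pos rfl]
          omega
        · refine ⟨d₃ + 1, ?_, h₃.subst a b⟩
          rw [show Levenshtein.defaultCost.substitute a b = 1 from if_neg hab]
          omega

def OccursNear {α : Type*} (k : ℕ) (B T : List α) (p : ℕ) : Prop :=
  ∃ q, p ≤ q + k ∧ q ≤ p + k ∧ (T.drop q).take B.length = B

theorem ncard_setOf_lt_and_eq_count (Q : ℕ → Prop) [DecidablePred Q] (n : ℕ) :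
    {t | t < n ∧ Q t}.ncard = Nat.count Q n := by
  rw [Nat.count_eq_card_filter_range, ← Set.ncard_coe_finset]
  congr
  ext
  simp

open Classical in
theorem count_not_occursNear_le {α : Type*} {k : ℕ} {T : List α} {L : List (List α)}
    {d pA pB : ℕ} (h : EditScript d L.flatten (T.drop pB))
    -- `pA`, `pB`: where the remaining blocks start in `T_A` and in `T_B`
    (hAB : pA + d ≤ pB + k) (hBA : pB + d ≤ pA + k) :
    Nat.count (fun t => ¬ OccursNear k (L.getD t []) T
      (pA + ((L.take t).map List.length).sum)) L.length ≤ d := by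
  induction L generalizing d pA pB with
  | nil => simp
  | cons B L ih =>
    rw [List.flatten_cons] at h
    obtain ⟨c, d', C, R, rfl, hT, hB, hL⟩ := h.split_append
    have hR : R = T.drop (pB + C.length) := by rw [← List.drop_drop, hT, List.drop_left]
    have hCB := hB.length_le
    have hBC := hB.symm.length_le
    have ih' := ih (pA := pA + B.length) (hR ▸ hL) (by omega) (by omega)
    rw [List.length_cons, Nat.count_succ']
    simp only [List.getD_cons_succ, List.take_succ_cons, List.map_cons, List.sum_cons,
      ← add_assoc, List.getD_cons_zero, List.take_zero, List.map_nil, List.sum_nil, add_zero]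
    rcases Nat.eq_zero_or_pos c with rfl | hc
    · have hocc : OccursNear k B T pA :=
        ⟨pB, by omega, by omega, by rw [hT, hB.eq_of_zero, List.take_left]⟩
      simpa [hocc] using ih'
    · have hfirst : (if ¬ OccursNear k B T pA then 1 else 0) ≤ c := by split_ifs <;> omega
      omega

/-- If `T_A` and `T_B` have edit distance at most `k` and `T_A` is partitioned
into the consecutive blocks of the list `L`, then all but at most `k` blocks
occur in `T_B` starting within distance `k` of their position in `T_A`. -/
theorem blocks_match_with_shift {α : Type*} [DecidableEq α] (k : ℕ)
    (TA TB : List α) (L : List (List α))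
    (hA : TA = L.flatten)
    (hed : levenshtein Levenshtein.defaultCost TA TB ≤ k) :
    Set.ncard {t : ℕ | t < L.length ∧
      ¬ ∃ q : ℕ,
        ((L.take t).map List.length).sum ≤ q + k ∧
        q ≤ ((L.take t).map List.length).sum + k ∧
        (TB.drop q).take (L.getD t []).length = L.getD t []} ≤ k := by
  classical
  obtain ⟨d, hd, h⟩ := exists_editScript_le_levenshtein TA TB
  subst hA
  have hcount := count_not_occursNear_le (k := k) (pA := 0) (pB := 0) (by simpa using h)
    (by omega) (by omega)
  simp only [zero_add] at hcount
  exact (ncard_setOf_lt_and_eq_count _ _).trans_le (hcount.trans (hd.trans hed))
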